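/- In the token-passing simulator for the IT model, between any two consecutive times at which some agent has role 'leader', exactly one simulated two-way transition (f_s applied at one agent and f_r applied at another agent on matching inputs) is completed, and the pair of simulated state changes is consistent with the two-way transition function δ(a_s,a_r) = (f_s(a_s,a_r), f_r(a_s,a_r)). -/
import Mathlib


/-- Roles of the token-passing simulator for the IT model. -/
inductive Role | leader | available | moving | starter | pending
deriving DecidableEq

/-- Local state of a simulating agent: a role, a simulated state of the two-way
protocol, and an optional token. -/
structure AState (Qp : Type*) where
  role : Role
  sim : Qp
  token : Option Qp

/-- New state of the starter of an interaction: it erases its token; a leader or a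
moving agent becomes available, a starter becomes pending. -/
def starterNew {Qp : Type*} (x : AState Qp) : AState Qp :=
  { role := match x.role with
      | Role.leader => Role.available
      | Role.moving => Role.available
      | Role.starter => Role.pending
      | ρ => ρ
    sim := x.sim
    token := none }

/-- New state of the reactor, reading the starter's (pre-interaction) state `xs`:
it copies the starter's token; if the starter is the leader it becomes moving; if the
starter is moving it becomes starter; if the starter is a starter it applies `fr` and
creates the token; if it is pending and receives the token it applies `fs` and becomes
the new leader. -/
def reactorNew {Qp : Type*} [DecidableEq Qp] (fs fr : Qp → Qp → Qp)
    (xs xr : AState Qp) : AState Qp :=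
  match xs.role with
  | Role.leader => { role := Role.moving, sim := xr.sim, token := xs.token }
  | Role.moving => { role := Role.starter, sim := xr.sim, token := xs.token }
  | Role.starter => { role := xr.role, sim := fr xs.sim xr.sim, token := some xr.sim }
  | _ =>
    if xr.role = Role.pending then
      match xs.token with
      | some v => { role := Role.leader, sim := fs xr.sim v, token := none }
      | none => { role := xr.role, sim := xr.sim, token := none }
    else { role := xr.role, sim := xr.sim, token := xs.token }

/-- One interaction step of the token-passing simulator. -/
def SimStep {Qp : Type*} [DecidableEq Qp] (fs fr : Qp → Qp → Qp) {n : ℕ}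
    (cfg cfg' : Fin n → AState Qp) : Prop :=
  ∃ s r : Fin n, s ≠ r ∧
    cfg' = Function.update (Function.update cfg s (starterNew (cfg s))) r
      (reactorNew fs fr (cfg s) (cfg r))


section Helpers
set_option linter.unusedSectionVars false
variable {Qp : Type*} [DecidableEq Qp] (fs fr : Qp → Qp → Qp) {n : ℕ}

lemma step_eval {c c' : Fin n → AState Qp} {s r : Fin n} (hsr : s ≠ r)
    (h : c' = Function.update (Function.update c s (starterNew (c s))) r
      (reactorNew fs fr (c s) (c r))) :
    c' r = reactorNew fs fr (c s) (c r) ∧ c' s = starterNew (c s) ∧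
      ∀ a, a ≠ s → a ≠ r → c' a = c a := by
  subst h
  refine ⟨Function.update_self _ _ _, ?_, fun a ha har => ?_⟩
  · rw [Function.update_of_ne hsr, Function.update_self]
  · rw [Function.update_of_ne har, Function.update_of_ne ha]

@[simp] lemma starterNew_sim (x : AState Qp) : (starterNew x).sim = x.sim := rfl
@[simp] lemma starterNew_token (x : AState Qp) : (starterNew x).token = none := rfl

lemma starterNew_role_av {x : AState Qp} (h : x.role = Role.available) :
    (starterNew x).role = Role.available := by simp [starterNew, h]
lemma starterNew_role_pd {x : AState Qp} (h : x.role = Role.pending) :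
    (starterNew x).role = Role.pending := by simp [starterNew, h]
lemma starterNew_role_ld {x : AState Qp} (h : x.role = Role.leader) :
    (starterNew x).role = Role.available := by simp [starterNew, h]
lemma starterNew_role_mv {x : AState Qp} (h : x.role = Role.moving) :
    (starterNew x).role = Role.available := by simp [starterNew, h]
lemma starterNew_role_st {x : AState Qp} (h : x.role = Role.starter) :
    (starterNew x).role = Role.pending := by simp [starterNew, h]

lemma reactorNew_ld {xs xr : AState Qp} (h : xs.role = Role.leader) :
    reactorNew fs fr xs xr = ⟨Role.moving, xr.sim, xs.token⟩ := by
  simp [reactorNew, h]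
lemma reactorNew_mv {xs xr : AState Qp} (h : xs.role = Role.moving) :
    reactorNew fs fr xs xr = ⟨Role.starter, xr.sim, xs.token⟩ := by
  simp [reactorNew, h]
lemma reactorNew_st {xs xr : AState Qp} (h : xs.role = Role.starter) :
    reactorNew fs fr xs xr = ⟨xr.role, fr xs.sim xr.sim, some xr.sim⟩ := by
  simp [reactorNew, h]

lemma reactorNew_other_np {xs xr : AState Qp}
    (h : xs.role = Role.available ∨ xs.role = Role.pending)
    (hr : xr.role ≠ Role.pending) :
    reactorNew fs fr xs xr = ⟨xr.role, xr.sim, xs.token⟩ := by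
  rcases h with h | h <;> simp [reactorNew, h, hr]

lemma reactorNew_other_p_some {xs xr : AState Qp} {v : Qp}
    (h : xs.role = Role.available ∨ xs.role = Role.pending)
    (hr : xr.role = Role.pending) (ht : xs.token = some v) :
    reactorNew fs fr xs xr = ⟨Role.leader, fs xr.sim v, none⟩ := by
  rcases h with h | h <;> simp [reactorNew, h, hr, ht]

lemma reactorNew_other_p_none {xs xr : AState Qp}
    (h : xs.role = Role.available ∨ xs.role = Role.pending)
    (hr : xr.role = Role.pending) (ht : xs.token = none) :
    reactorNew fs fr xs xr = ⟨xr.role, xr.sim, none⟩ := by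
  rcases h with h | h <;> simp [reactorNew, h, hr, ht]



/-- A "boring" step: the starter is available or pending with no token.
Then roles and sims are unchanged, tokens are unchanged away from `r`,
and `r`'s token becomes `none`. -/
lemma boring {c c' : Fin n → AState Qp} {s r : Fin n} (hsr : s ≠ r)
    (h : c' = Function.update (Function.update c s (starterNew (c s))) r
      (reactorNew fs fr (c s) (c r)))
    (hrole : (c s).role = Role.available ∨ (c s).role = Role.pending)
    (htok : (c s).token = none) :
    (∀ a, (c' a).role = (c a).role) ∧ (∀ a, (c' a).sim = (c a).sim) ∧
    (∀ a, a ≠ r → (c' a).token = (c a).token) ∧ (c' r).token = none := by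
  obtain ⟨hr, hs, ho⟩ := step_eval fs fr hsr h
  have hrr : c' r = ⟨(c r).role, (c r).sim, none⟩ := by
    by_cases hp : (c r).role = Role.pending
    · rw [hr, reactorNew_other_p_none fs fr hrole hp htok]
    · rw [hr, reactorNew_other_np fs fr hrole hp, htok]
  have hss1 : (c' s).role = (c s).role := by
    rcases hrole with h1 | h1
    · rw [hs, starterNew_role_av h1, h1]
    · rw [hs, starterNew_role_pd h1, h1]
  refine ⟨fun a => ?_, fun a => ?_, fun a har => ?_, by rw [hrr]⟩
  · by_cases h1 : a = r
    · subst h1; rw [hrr]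
    · by_cases h2 : a = s
      · subst h2; exact hss1
      · rw [ho a h2 h1]
  · by_cases h1 : a = r
    · subst h1; rw [hrr]
    · by_cases h2 : a = s
      · subst h2; rw [hs, starterNew_sim]
      · rw [ho a h2 h1]
  · by_cases h2 : a = s
    · subst h2; rw [hs, starterNew_token, htok]
    · rw [ho a h2 har]

def UniqRole (c : Fin n → AState Qp) (ρ : Role) (x : Fin n) : Prop :=
  (c x).role = ρ ∧ ∀ b, b ≠ x → (c b).role = Role.available

def NoTok (c : Fin n → AState Qp) : Prop := ∀ a, (c a).token = none

def AbsP (c : Fin n → AState Qp) : Prop :=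
  ∃ p, UniqRole c Role.pending p ∧
    (NoTok c ∨ ∃ b v, b ≠ p ∧ (c b).token = some v ∧
      ∀ a, a ≠ b → (c a).token = none)

def AbsInv (c : Fin n → AState Qp) : Prop :=
  ((∃ x, UniqRole c Role.leader x) ∧ NoTok c) ∨
  ((∃ x, UniqRole c Role.moving x) ∧ NoTok c) ∨
  ((∃ x, UniqRole c Role.starter x) ∧ NoTok c) ∨ AbsP c

lemma uniq_of_roles {c c' : Fin n → AState Qp} {ρ : Role} {x : Fin n}
    (hroles : ∀ a, (c' a).role = (c a).role) (h : UniqRole c ρ x) :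
    UniqRole c' ρ x :=
  ⟨by rw [hroles]; exact h.1, fun b hb => by rw [hroles]; exact h.2 b hb⟩

lemma notok_of_boring {c c' : Fin n → AState Qp} {r : Fin n}
    (htk : ∀ a, a ≠ r → (c' a).token = (c a).token) (hrn : (c' r).token = none)
    (h : NoTok c) : NoTok c' := fun a => by
  by_cases har : a = r
  · subst har; exact hrn
  · rw [htk a har]; exact h a

lemma ne_pending_of_av {x : AState Qp} (h : x.role = Role.available) :
    x.role ≠ Role.pending := by rw [h]; simp

lemma absInv_step {c c' : Fin n → AState Qp} (hinv : AbsInv c)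
    (hstep : SimStep fs fr c c') : AbsInv c' := by
  obtain ⟨s, r, hsr, heq⟩ := hstep
  obtain ⟨hr, hs, ho⟩ := step_eval fs fr hsr heq
  rcases hinv with ⟨⟨x, hx, hav⟩, htok⟩ | ⟨⟨x, hx, hav⟩, htok⟩ |
    ⟨⟨x, hx, hav⟩, htok⟩ | ⟨p, ⟨hp, hav⟩, htokdis⟩
  · -- leader phase
    by_cases hsx : s = x
    · subst hsx
      refine Or.inr (Or.inl ⟨⟨r, ?_, fun b hb => ?_⟩, fun a => ?_⟩)
      · rw [hr, reactorNew_ld fs fr hx]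
      · by_cases hbs : b = s
        · subst hbs; rw [hs]; exact starterNew_role_ld hx
        · rw [ho b hbs hb]; exact hav b hbs
      · by_cases har : a = r
        · subst har; rw [hr, reactorNew_ld fs fr hx]; exact htok s
        · by_cases has : a = s
          · subst has; rw [hs, starterNew_token]
          · rw [ho a has har]; exact htok a
    · obtain ⟨hro, _, htk, hrn⟩ := boring fs fr hsr heq (Or.inl (hav s hsx)) (htok s)
      exact Or.inl ⟨⟨x, uniq_of_roles hro ⟨hx, hav⟩⟩, notok_of_boring htk hrn htok⟩
  · -- moving phase
    by_cases hsx : s = x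
    · subst hsx
      refine Or.inr (Or.inr (Or.inl ⟨⟨r, ?_, fun b hb => ?_⟩, fun a => ?_⟩))
      · rw [hr, reactorNew_mv fs fr hx]
      · by_cases hbs : b = s
        · subst hbs; rw [hs]; exact starterNew_role_mv hx
        · rw [ho b hbs hb]; exact hav b hbs
      · by_cases har : a = r
        · subst har; rw [hr, reactorNew_mv fs fr hx]; exact htok s
        · by_cases has : a = s
          · subst has; rw [hs, starterNew_token]
          · rw [ho a has har]; exact htok a
    · obtain ⟨hro, _, htk, hrn⟩ := boring fs fr hsr heq (Or.inl (hav s hsx)) (htok s)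
      exact Or.inr (Or.inl ⟨⟨x, uniq_of_roles hro ⟨hx, hav⟩⟩,
        notok_of_boring htk hrn htok⟩)
  · -- starter phase
    by_cases hsx : s = x
    · subst hsx
      refine Or.inr (Or.inr (Or.inr ⟨s, ⟨?_, fun b hb => ?_⟩,
        Or.inr ⟨r, (c r).sim, hsr.symm, ?_, fun a ha => ?_⟩⟩))
      · rw [hs]; exact starterNew_role_st hx
      · by_cases hbr : b = r
        · subst hbr; rw [hr, reactorNew_st fs fr hx]; exact hav b hsr.symm
        · rw [ho b hb hbr]; exact hav b hb
      · rw [hr, reactorNew_st fs fr hx]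
      · by_cases has : a = s
        · subst has; rw [hs, starterNew_token]
        · rw [ho a has ha]; exact htok a
    · obtain ⟨hro, _, htk, hrn⟩ := boring fs fr hsr heq (Or.inl (hav s hsx)) (htok s)
      exact Or.inr (Or.inr (Or.inl ⟨⟨x, uniq_of_roles hro ⟨hx, hav⟩⟩,
        notok_of_boring htk hrn htok⟩))
  · -- pending phase
    rcases htokdis with htok | ⟨b, v, hbp, hbt, hoth⟩
    · -- dead
      have hrole : (c s).role = Role.available ∨ (c s).role = Role.pending := by
        by_cases hsp : s = p
        · exact Or.inr (hsp ▸ hp)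
        · exact Or.inl (hav s hsp)
      obtain ⟨hro, _, htk, hrn⟩ := boring fs fr hsr heq hrole (htok s)
      exact Or.inr (Or.inr (Or.inr ⟨p, uniq_of_roles hro ⟨hp, hav⟩,
        Or.inl (notok_of_boring htk hrn htok)⟩))
    · -- live
      by_cases hsb : s = b
      · subst hsb
        have hsav : (c s).role = Role.available := hav s hbp
        by_cases hrp : r = p
        · subst hrp
          refine Or.inl ⟨⟨r, ?_, fun b' hb' => ?_⟩, fun a => ?_⟩
          · rw [hr, reactorNew_other_p_some fs fr (Or.inl hsav) hp hbt]
          · by_cases hbs : b' = s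
            · subst hbs; rw [hs]; exact starterNew_role_av hsav
            · rw [ho b' hbs hb']; exact hav b' hb'
          · by_cases har : a = r
            · subst har; rw [hr, reactorNew_other_p_some fs fr (Or.inl hsav) hp hbt]
            · by_cases has : a = s
              · subst has; rw [hs, starterNew_token]
              · rw [ho a has har]; exact hoth a has
        · have hrnp : (c r).role ≠ Role.pending := ne_pending_of_av (hav r hrp)
          refine Or.inr (Or.inr (Or.inr ⟨p, ⟨?_, fun b' hb' => ?_⟩,
            Or.inr ⟨r, v, hrp, ?_, fun a ha => ?_⟩⟩))
          · rw [ho p (Ne.symm hbp) (Ne.symm hrp)]; exact hp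
          · by_cases hbs : b' = s
            · subst hbs; rw [hs]; exact starterNew_role_av hsav
            · by_cases hbr : b' = r
              · subst hbr; rw [hr, reactorNew_other_np fs fr (Or.inl hsav) hrnp]
                exact hav b' hb'
              · rw [ho b' hbs hbr]; exact hav b' hb'
          · rw [hr, reactorNew_other_np fs fr (Or.inl hsav) hrnp]; exact hbt
          · by_cases has : a = s
            · subst has; rw [hs, starterNew_token]
            · rw [ho a has ha]; exact hoth a has
      · have hstk : (c s).token = none := hoth s hsb
        have hrole : (c s).role = Role.available ∨ (c s).role = Role.pending := by
          by_cases hsp : s = p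
          · exact Or.inr (hsp ▸ hp)
          · exact Or.inl (hav s hsp)
        obtain ⟨hro, _, htk, hrn⟩ := boring fs fr hsr heq hrole hstk
        refine Or.inr (Or.inr (Or.inr ⟨p, uniq_of_roles hro ⟨hp, hav⟩, ?_⟩))
        by_cases hbr : b = r
        · refine Or.inl (fun a => ?_)
          by_cases har : a = r
          · subst har; exact hrn
          · rw [htk a har]; exact hoth a (fun h => har (h.trans hbr))
        · refine Or.inr ⟨b, v, hbp, by rw [htk b hbr]; exact hbt, fun a ha => ?_⟩
          by_cases har : a = r
          · subst har; exact hrn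
          · rw [htk a har]; exact hoth a ha

/-- Relative phase: one agent of role `ρ`, no tokens, all sims as in base `d`. -/
def RelMS (d c : Fin n → AState Qp) (ρ : Role) : Prop :=
  (∃ x, UniqRole c ρ x) ∧ NoTok c ∧ ∀ a, (c a).sim = (d a).sim

/-- Relative pending phase: pending `p` with its base sim, `q` already updated by
`fr`, everyone else with base sims, and at most one token carrying `q`'s base sim. -/
def RelP (d c : Fin n → AState Qp) : Prop :=
  ∃ p q, p ≠ q ∧ UniqRole c Role.pending p ∧
    (c p).sim = (d p).sim ∧ (c q).sim = fr (d p).sim (d q).sim ∧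
    (∀ a, a ≠ p → a ≠ q → (c a).sim = (d a).sim) ∧
    (NoTok c ∨ ∃ b, b ≠ p ∧ (c b).token = some ((d q).sim) ∧
      ∀ a, a ≠ b → (c a).token = none)

/-- Relative done phase: a new leader `p`, the two-way transition completed. -/
def RelD (d c : Fin n → AState Qp) : Prop :=
  ∃ p q, p ≠ q ∧ (c p).role = Role.leader ∧
    (c p).sim = fs (d p).sim (d q).sim ∧ (c q).sim = fr (d p).sim (d q).sim ∧
    ∀ a, a ≠ p → a ≠ q → (c a).sim = (d a).sim

lemma relInv_step {d c c' : Fin n → AState Qp}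
    (hinv : RelMS d c Role.moving ∨ RelMS d c Role.starter ∨ RelP fr d c)
    (hstep : SimStep fs fr c c') :
    RelMS d c' Role.moving ∨ RelMS d c' Role.starter ∨ RelP fr d c' ∨
      RelD fs fr d c' := by
  obtain ⟨s, r, hsr, heq⟩ := hstep
  obtain ⟨hr, hs, ho⟩ := step_eval fs fr hsr heq
  rcases hinv with ⟨⟨x, hx, hav⟩, htok, hsim⟩ | ⟨⟨x, hx, hav⟩, htok, hsim⟩ |
    ⟨p, q, hpq, ⟨hp, hav⟩, hsp, hsq, hso, htokdis⟩
  · -- moving phase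
    by_cases hsx : s = x
    · subst hsx
      refine Or.inr (Or.inl ⟨⟨r, ?_, fun b hb => ?_⟩, fun a => ?_, fun a => ?_⟩)
      · rw [hr, reactorNew_mv fs fr hx]
      · by_cases hbs : b = s
        · subst hbs; rw [hs]; exact starterNew_role_mv hx
        · rw [ho b hbs hb]; exact hav b hbs
      · by_cases har : a = r
        · subst har; rw [hr, reactorNew_mv fs fr hx]; exact htok s
        · by_cases has : a = s
          · subst has; rw [hs, starterNew_token]
          · rw [ho a has har]; exact htok a
      · by_cases har : a = r
        · subst har; rw [hr, reactorNew_mv fs fr hx]; exact hsim a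
        · by_cases has : a = s
          · subst has; rw [hs, starterNew_sim]; exact hsim a
          · rw [ho a has har]; exact hsim a
    · obtain ⟨hro, hsi, htk, hrn⟩ := boring fs fr hsr heq (Or.inl (hav s hsx)) (htok s)
      exact Or.inl ⟨⟨x, uniq_of_roles hro ⟨hx, hav⟩⟩, notok_of_boring htk hrn htok,
        fun a => (hsi a).trans (hsim a)⟩
  · -- starter phase
    by_cases hsx : s = x
    · subst hsx
      refine Or.inr (Or.inr (Or.inl ⟨s, r, hsr, ⟨?_, fun b hb => ?_⟩, ?_, ?_,
        fun a ha har => ?_, Or.inr ⟨r, hsr.symm, ?_, fun a ha => ?_⟩⟩))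
      · rw [hs]; exact starterNew_role_st hx
      · by_cases hbr : b = r
        · subst hbr; rw [hr, reactorNew_st fs fr hx]; exact hav b hsr.symm
        · rw [ho b hb hbr]; exact hav b hb
      · rw [hs, starterNew_sim]; exact hsim s
      · rw [hr, reactorNew_st fs fr hx]; simp only []
        rw [hsim s, hsim r]
      · rw [ho a ha har]; exact hsim a
      · rw [hr, reactorNew_st fs fr hx]; simp only []
        rw [hsim r]
      · by_cases has : a = s
        · subst has; rw [hs, starterNew_token]
        · rw [ho a has ha]; exact htok a
    · obtain ⟨hro, hsi, htk, hrn⟩ := boring fs fr hsr heq (Or.inl (hav s hsx)) (htok s)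
      exact Or.inr (Or.inl ⟨⟨x, uniq_of_roles hro ⟨hx, hav⟩⟩,
        notok_of_boring htk hrn htok, fun a => (hsi a).trans (hsim a)⟩)
  · -- pending phase
    have hrole : (c s).role = Role.available ∨ (c s).role = Role.pending := by
      by_cases hsp : s = p
      · exact Or.inr (hsp ▸ hp)
      · exact Or.inl (hav s hsp)
    rcases htokdis with htok | ⟨b, hbp, hbt, hoth⟩
    · -- dead
      obtain ⟨hro, hsi, htk, hrn⟩ := boring fs fr hsr heq hrole (htok s)
      exact Or.inr (Or.inr (Or.inl ⟨p, q, hpq, uniq_of_roles hro ⟨hp, hav⟩,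
        (hsi p).trans hsp, (hsi q).trans hsq,
        fun a ha haq => (hsi a).trans (hso a ha haq),
        Or.inl (notok_of_boring htk hrn htok)⟩))
    · -- live
      by_cases hsb : s = b
      · subst hsb
        have hsav : (c s).role = Role.available := hav s hbp
        by_cases hrp : r = p
        · subst hrp
          -- leader created: RelD
          have hcr : c' r = ⟨Role.leader, fs (c r).sim ((d q).sim), none⟩ := by
            rw [hr, reactorNew_other_p_some fs fr (Or.inl hsav) hp hbt]
          refine Or.inr (Or.inr (Or.inr ⟨r, q, hpq, by rw [hcr], ?_, ?_,
            fun a ha haq => ?_⟩))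
          · rw [hcr]; simp only []; rw [hsp]
          · by_cases hqs : q = s
            · subst hqs; rw [hs, starterNew_sim]; exact hsq
            · rw [ho q hqs (Ne.symm hpq)]; exact hsq
          · by_cases has : a = s
            · subst has; rw [hs, starterNew_sim]; exact hso a ha haq
            · rw [ho a has ha]; exact hso a ha haq
        · -- token moves to r
          have hrnp : (c r).role ≠ Role.pending := ne_pending_of_av (hav r hrp)
          have hcr : c' r = ⟨(c r).role, (c r).sim, (c s).token⟩ := by
            rw [hr, reactorNew_other_np fs fr (Or.inl hsav) hrnp]
          have hsi : ∀ a, (c' a).sim = (c a).sim := by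
            intro a
            by_cases har : a = r
            · subst har; rw [hcr]
            · by_cases has : a = s
              · subst has; rw [hs, starterNew_sim]
              · rw [ho a has har]
          refine Or.inr (Or.inr (Or.inl ⟨p, q, hpq, ⟨?_, fun b' hb' => ?_⟩,
            (hsi p).trans hsp, (hsi q).trans hsq,
            fun a ha haq => (hsi a).trans (hso a ha haq),
            Or.inr ⟨r, hrp, by rw [hcr]; exact hbt, fun a ha => ?_⟩⟩))
          · rw [ho p (Ne.symm hbp) (Ne.symm hrp)]; exact hp
          · by_cases hbs : b' = s
            · subst hbs; rw [hs]; exact starterNew_role_av hsav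
            · by_cases hbr : b' = r
              · subst hbr; rw [hcr]; exact hav b' hb'
              · rw [ho b' hbs hbr]; exact hav b' hb'
          · by_cases has : a = s
            · subst has; rw [hs, starterNew_token]
            · rw [ho a has ha]; exact hoth a has
      · -- starter not the token holder: boring
        have hstk : (c s).token = none := hoth s hsb
        obtain ⟨hro, hsi, htk, hrn⟩ := boring fs fr hsr heq hrole hstk
        refine Or.inr (Or.inr (Or.inl ⟨p, q, hpq, uniq_of_roles hro ⟨hp, hav⟩,
          (hsi p).trans hsp, (hsi q).trans hsq,
          fun a ha haq => (hsi a).trans (hso a ha haq), ?_⟩))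
        by_cases hbr : b = r
        · refine Or.inl (fun a => ?_)
          by_cases har : a = r
          · subst har; exact hrn
          · rw [htk a har]; exact hoth a (fun h => har (h.trans hbr))
        · refine Or.inr ⟨b, hbp, by rw [htk b hbr]; exact hbt, fun a ha => ?_⟩
          by_cases har : a = r
          · subst har; exact hrn
          · rw [htk a har]; exact hoth a ha

lemma not_leader_of_uniq {c : Fin n → AState Qp} {ρ : Role} {x : Fin n}
    (h : UniqRole c ρ x) (hρ : ρ ≠ Role.leader) :
    ¬ ∃ a, (c a).role = Role.leader := by
  rintro ⟨a, ha⟩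
  rcases eq_or_ne a x with rfl | hne
  · exact hρ (h.1.symm.trans ha)
  · exact absurd ((h.2 a hne).symm.trans ha) (by simp)

end Helpers
/-- Between two consecutive times at which a leader is present (with the leadership
actually relinquished in between), exactly one simulated two-way transition is
completed: some starter `s` and reactor `r` change their simulated states according to
`δ(a_s,a_r) = (fs a_s a_r, fr a_s a_r)`, and no other agent changes simulated state. -/
theorem stmt9 {Qp : Type*} [DecidableEq Qp] (fs fr : Qp → Qp → Qp)
    (n : ℕ) (hn : 2 < n) (e : ℕ → Fin n → AState Qp)
    (hinit : (∃ a, (e 0 a).role = Role.leader ∧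
        ∀ b, b ≠ a → (e 0 b).role = Role.available) ∧ ∀ a, (e 0 a).token = none)
    (hexec : ∀ t, SimStep fs fr (e t) (e (t + 1)))
    (t1 t2 : ℕ) (h12 : t1 + 1 < t2)
    (hl1 : ∃ a, (e t1 a).role = Role.leader)
    (hl2 : ∃ a, (e t2 a).role = Role.leader)
    (hbetween : ∀ t, t1 < t → t < t2 → ¬ ∃ a, (e t a).role = Role.leader) :
    ∃ s r : Fin n, s ≠ r ∧
      (e t2 s).sim = fs ((e t1 s).sim) ((e t1 r).sim) ∧
      (e t2 r).sim = fr ((e t1 s).sim) ((e t1 r).sim) ∧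
      ∀ a, a ≠ s → a ≠ r → (e t2 a).sim = (e t1 a).sim := by

  classical
  have habs : ∀ t, AbsInv (e t) := by
    intro t
    induction t with
    | zero =>
      obtain ⟨⟨a, h1, h2⟩, h3⟩ := hinit
      exact Or.inl ⟨⟨a, h1, h2⟩, h3⟩
    | succ t ih => exact absInv_step fs fr ih (hexec t)
  obtain ⟨l, hl⟩ := hl1
  have hL : UniqRole (e t1) Role.leader l ∧ NoTok (e t1) := by
    rcases habs t1 with ⟨⟨x, hx, hav⟩, htok⟩ | ⟨⟨x, hx, hav⟩, htok⟩ |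
      ⟨⟨x, hx, hav⟩, htok⟩ | ⟨p, ⟨hp, hav⟩, _⟩
    · rcases eq_or_ne l x with rfl | hne
      · exact ⟨⟨hx, hav⟩, htok⟩
      · exact absurd ((hav l hne).symm.trans hl) (by simp)
    · exact absurd ⟨l, hl⟩ (not_leader_of_uniq ⟨hx, hav⟩ (by simp))
    · exact absurd ⟨l, hl⟩ (not_leader_of_uniq ⟨hx, hav⟩ (by simp))
    · exact absurd ⟨l, hl⟩ (not_leader_of_uniq ⟨hp, hav⟩ (by simp))
  obtain ⟨⟨hlrole, hlav⟩, hltok⟩ := hL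
  have hM : RelMS (e t1) (e (t1 + 1)) Role.moving := by
    obtain ⟨s, r, hsr, heq⟩ := hexec t1
    obtain ⟨hr, hs, ho⟩ := step_eval fs fr hsr heq
    by_cases hsl : s = l
    · subst hsl
      refine ⟨⟨r, ?_, fun b hb => ?_⟩, fun a => ?_, fun a => ?_⟩
      · rw [hr, reactorNew_ld fs fr hlrole]
      · by_cases hbs : b = s
        · subst hbs; rw [hs]; exact starterNew_role_ld hlrole
        · rw [ho b hbs hb]; exact hlav b hbs
      · by_cases har : a = r
        · subst har; rw [hr, reactorNew_ld fs fr hlrole]; exact hltok s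
        · by_cases has : a = s
          · subst has; rw [hs, starterNew_token]
          · rw [ho a has har]; exact hltok a
      · by_cases har : a = r
        · subst har; rw [hr, reactorNew_ld fs fr hlrole]
        · by_cases has : a = s
          · subst has; rw [hs, starterNew_sim]
          · rw [ho a has har]
    · exfalso
      refine hbetween (t1 + 1) (Nat.lt_succ_self t1) h12 ⟨l, ?_⟩
      by_cases hrl : r = l
      · subst hrl
        rw [hr, reactorNew_other_np fs fr (Or.inl (hlav s hsl))
          (by rw [hlrole]; simp)]
        exact hlrole
      · rw [ho l (Ne.symm hsl) (Ne.symm hrl)]; exact hlrole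
  have hrel : ∀ t, t1 + 1 ≤ t → t ≤ t2 →
      RelMS (e t1) (e t) Role.moving ∨ RelMS (e t1) (e t) Role.starter ∨
        RelP fr (e t1) (e t) ∨ RelD fs fr (e t1) (e t) := by
    intro t ht
    induction t, ht using Nat.le_induction with
    | base => exact fun _ => Or.inl hM
    | succ t ht ih =>
      intro ht2
      have htlt : t < t2 := ht2
      rcases ih htlt.le with h | h | h | h
      · exact relInv_step fs fr (Or.inl h) (hexec t)
      · exact relInv_step fs fr (Or.inr (Or.inl h)) (hexec t)
      · exact relInv_step fs fr (Or.inr (Or.inr h)) (hexec t)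
      · obtain ⟨p, q, _, hlp, _⟩ := h
        exact absurd ⟨p, hlp⟩ (hbetween t ht htlt)
  rcases hrel t2 h12.le le_rfl with h | h | h | h
  · obtain ⟨x, hx⟩ := h.1
    exact absurd hl2 (not_leader_of_uniq hx (by simp))
  · obtain ⟨x, hx⟩ := h.1
    exact absurd hl2 (not_leader_of_uniq hx (by simp))
  · obtain ⟨p, q, _, hu, _⟩ := h
    exact absurd hl2 (not_leader_of_uniq hu (by simp))
  · obtain ⟨p, q, hpq, _, h1, h2, h3⟩ := h
    exact ⟨p, q, hpq, h1, h2, h3⟩
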